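/- Let p ≡ 1 (mod 3) be prime, ρ a character of F_p* of order 3, and write p = (c² + 3d²)/4 with c ≡ 1 (mod 3) the trace of Frobenius of y² + y = x³. Then the p-th Fourier coefficient b(p) of η(3z)⁸ satisfies b(p) = c³ − 3pc, and equals −p³·[(ρ choose ρ²)³ + (ρ² choose ρ)³]. -/

import Mathlib

/-!
Under `(u, v) = (y + 1, -x)` the curve `y² + y = x³` becomes `v³ = u(1 - u)`. Counting cube roots
with the cubic character `ρ` gives `p + J(ρ, ρ) + J(ρ², ρ²)` affine points, so
`J(ρ, ρ) + J(ρ², ρ²) = -c`, while `J(ρ, ρ) · J(ρ², ρ²) = p`. Hence `-J(ρ, ρ)` and `-J(ρ², ρ²)` are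
the Frobenius eigenvalues, and `J(ρ, ρ)³ + J(ρ², ρ²)³ = -(c³ - 3pc)`. As `ρ(-1) = 1`, Greene's
normalized sums are `J(ρ, ρ) / p` and `J(ρ², ρ²) / p`.
-/

/-- Greene's normalized Jacobi sum `(A choose B) = B(−1)/p · J(A, B̄)`. -/
noncomputable def jbinom {F : Type*} [Field F] [Fintype F] (A B : MulChar F ℂ) : ℂ :=
  B (-1) / (Fintype.card F : ℂ) * ∑ x : F, A x * B⁻¹ (1 - x)

open Finset

lemma inv_eq_sq_of_orderOf_eq_three {G : Type*} [Group G] {x : G} (hx : orderOf x = 3) :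
    x⁻¹ = x ^ 2 :=
  inv_eq_of_mul_eq_one_left <| by
    rw [← pow_succ, show 2 + 1 = orderOf x by omega, pow_orderOf_eq_one]

namespace MulChar

lemma orderOf_apply_eq_orderOf {M R : Type*} [CommMonoid M] [CommMonoidWithZero R] {g : Mˣ}
    (hg : ∀ x, x ∈ Subgroup.zpowers g) (χ : MulChar M R) :
    orderOf (χ g) = orderOf χ := by
  refine (orderOf_eq_orderOf_iff.mpr fun k ↦ ?_).symm
  rcases eq_or_ne k 0 with rfl | hk
  · simp
  rw [eq_iff hg, pow_apply' χ hk, one_apply_coe]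

variable {F : Type*} [Field F] [Finite F]

section CommMonoidWithZero

variable {R : Type*} [CommMonoidWithZero R]

lemma exists_pow_orderOf_eq_of_apply_eq_one (χ : MulChar F R) {a : F} (ha : a ≠ 0)
    (hχa : χ a = 1) : ∃ s : F, s ^ orderOf χ = a := by
  obtain ⟨g, hg⟩ := IsCyclic.exists_generator (α := Fˣ)
  obtain ⟨m, hm⟩ := mem_powers_iff_mem_zpowers.mpr (hg (Units.mk0 a ha))
  have hgm : (g : F) ^ m = a := by simpa using congrArg Units.val hm
  obtain ⟨k, rfl⟩ : orderOf χ ∣ m := by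
    rw [← orderOf_apply_eq_orderOf hg, orderOf_dvd_iff_pow_eq_one, ← map_pow, hgm, hχa]
  exact ⟨(g : F) ^ k, by rw [← pow_mul, mul_comm, hgm]⟩

lemma exists_isPrimitiveRoot_orderOf (χ : MulChar F R) :
    ∃ ζ : F, IsPrimitiveRoot ζ (orderOf χ) := by
  classical
  have := Fintype.ofFinite F
  obtain ⟨g, hg⟩ := IsCyclic.exists_ofOrder_eq_natCard (α := Fˣ)
  obtain ⟨k, hk⟩ : orderOf χ ∣ orderOf g := by
    rw [hg, Nat.card_eq_fintype_card]
    exact orderOf_dvd_of_pow_eq_one χ.pow_card_eq_one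
  exact ⟨_, IsPrimitiveRoot.coe_units_iff.mpr
    ((IsPrimitiveRoot.orderOf g).pow (_root_.orderOf_pos g) (hk.trans (mul_comm _ _)))⟩

end CommMonoidWithZero

lemma natCard_pow_orderOf_eq_sum_pow {R : Type*} [CommRing R] [IsDomain R] (χ : MulChar F R)
    (a : F) :
    (Nat.card {x : F // x ^ orderOf χ = a} : R) = ∑ i ∈ range (orderOf χ), χ a ^ i := by
  have hn : 0 < orderOf χ := χ.orderOf_pos
  rcases eq_or_ne a 0 with rfl | ha
  · obtain ⟨m, hm⟩ := Nat.exists_eq_add_one_of_ne_zero hn.ne'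
    simp [hm, sum_range_succ']
  by_cases h1 : χ a = 1
  · obtain ⟨s, rfl⟩ := χ.exists_pow_orderOf_eq_of_apply_eq_one ha h1
    obtain ⟨ζ, hζ⟩ := χ.exists_isPrimitiveRoot_orderOf
    classical
    have hroots : Nat.card {x : F // x ^ orderOf χ = s ^ orderOf χ} = orderOf χ := by
      rw [← Nat.card_congr (Equiv.subtypeEquivRight fun x ↦
          Polynomial.mem_nthRootsFinset hn (s ^ orderOf χ)), Nat.card_eq_fintype_card,
        Fintype.card_coe, Polynomial.nthRootsFinset_def,
        Multiset.toFinset_card_of_nodup (hζ.nthRoots_nodup ha), hζ.card_nthRoots,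
        if_pos ⟨s, rfl⟩]
    simp [hroots, h1]
  · have hempty : Nat.card {x : F // x ^ orderOf χ = a} = 0 := by
      refine Nat.card_eq_zero.mpr (Or.inl ⟨fun ⟨x, hx⟩ ↦ h1 ?_⟩)
      have hx0 : x ≠ 0 := by rintro rfl; exact ha (by rw [← hx, zero_pow hn.ne'])
      rw [← hx, map_pow, ← pow_apply' χ hn.ne', pow_orderOf_eq_one, one_apply hx0.isUnit]
    have hgeom := geom_sum_mul (χ a) (orderOf χ)
    rw [← pow_apply' χ hn.ne', pow_orderOf_eq_one, one_apply ha.isUnit, sub_self, mul_eq_zero,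
      or_iff_left (sub_ne_zero.mpr h1)] at hgeom
    rw [hempty, hgeom, Nat.cast_zero]

end MulChar

section

variable {F : Type*} [Field F] [Fintype F]

lemma jbinom_eq_jacobiSum_div (A : MulChar F ℂ) {B : MulChar F ℂ} (hB : B (-1) = 1) :
    jbinom A B = jacobiSum A B⁻¹ / Fintype.card F := by
  rw [jbinom, jacobiSum, hB]
  ring

lemma jbinom_self_sq_of_orderOf_eq_three {ρ : MulChar F ℂ} (hρ : orderOf ρ = 3) :
    jbinom ρ (ρ ^ 2) = jacobiSum ρ ρ / Fintype.card F := by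
  have hneg : (ρ ^ 2) (-1) = 1 := by
    rw [MulChar.pow_apply' ρ two_ne_zero, ← map_pow, neg_one_sq, map_one]
  rw [jbinom_eq_jacobiSum_div _ hneg, ← inv_eq_sq_of_orderOf_eq_three hρ, inv_inv]

lemma jbinom_sq_self_of_orderOf_eq_three {ρ : MulChar F ℂ} (hρ : orderOf ρ = 3) :
    jbinom (ρ ^ 2) ρ = jacobiSum (ρ ^ 2) (ρ ^ 2) / Fintype.card F := by
  have hneg : ρ (-1) = 1 :=
    ρ.val_neg_one_eq_one_of_odd_order (by decide) (hρ ▸ pow_orderOf_eq_one ρ)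
  rw [jbinom_eq_jacobiSum_div _ hneg, inv_eq_sq_of_orderOf_eq_three hρ]

variable {R : Type*} [CommRing R] [IsDomain R]

lemma natCard_curve_eq_card_add_jacobiSum_of_orderOf_eq_three {ρ : MulChar F R}
    (hρ : orderOf ρ = 3) :
    (Nat.card {P : F × F // P.2 ^ 2 + P.2 = P.1 ^ 3} : R) =
      Fintype.card F + jacobiSum ρ ρ + jacobiSum (ρ ^ 2) (ρ ^ 2) := by
  let e : {P : F × F // P.2 ^ 2 + P.2 = P.1 ^ 3} ≃ {Q : F × F // Q.2 ^ 3 = Q.1 * (1 - Q.1)} :=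
    { toFun P := ⟨(P.1.2 + 1, -P.1.1), by linear_combination P.2⟩
      invFun Q := ⟨(-Q.1.2, Q.1.1 - 1), by linear_combination Q.2⟩
      left_inv P := by ext <;> simp
      right_inv Q := by ext <;> simp }
  rw [Nat.card_congr (e.trans (Equiv.subtypeProdEquivSigmaSubtype fun u v ↦ v ^ 3 = u * (1 - u))),
    Nat.card_sigma, Nat.cast_sum]
  simp only [← hρ, MulChar.natCard_pow_orderOf_eq_sum_pow]
  simp [hρ, sum_range_succ, sum_add_distrib, jacobiSum, MulChar.pow_apply' ρ two_ne_zero, mul_pow]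

lemma jacobiSum_mul_jacobiSum_sq_of_orderOf_eq_three {F' : Type*} [Field F']
    (hchar : ringChar F' ≠ ringChar F) {ρ : MulChar F F'} (hρ : orderOf ρ = 3) :
    jacobiSum ρ ρ * jacobiSum (ρ ^ 2) (ρ ^ 2) = Fintype.card F := by
  have hne : ρ ≠ 1 := by rintro rfl; simp at hρ
  have hsq : ρ * ρ ≠ 1 := by
    rw [← sq]
    exact pow_ne_one_of_lt_orderOf two_ne_zero (by omega)
  simpa [inv_eq_sq_of_orderOf_eq_three hρ] using jacobiSum_mul_jacobiSum_inv hchar hne hne hsq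

end

theorem eta_coefficient_jacobi_general (p : ℕ) [Fact p.Prime]
    (ρ : MulChar (ZMod p) ℂ) (hρ : orderOf ρ = 3)
    (c : ℤ)
    (hc : c = (p : ℤ) + 1 -
      (1 + (Nat.card {P : ZMod p × ZMod p // P.2 ^ 2 + P.2 = P.1 ^ 3} : ℤ)))
    (α : ℂ) (hα1 : α + (starRingEnd ℂ) α = (c : ℂ)) (hα2 : α * (starRingEnd ℂ) α = (p : ℂ))
    (b : ℂ) (hb : b = α ^ 3 + ((starRingEnd ℂ) α) ^ 3) :
    b = (c : ℂ) ^ 3 - 3 * (p : ℂ) * (c : ℂ) ∧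
      b = -(p : ℂ) ^ 3 * ((jbinom ρ (ρ ^ 2)) ^ 3 + (jbinom (ρ ^ 2) ρ) ^ 3) := by
  have hp : (p : ℂ) ≠ 0 := Nat.cast_ne_zero.mpr (Fact.out : p.Prime).ne_zero
  have hchar : ringChar ℂ ≠ ringChar (ZMod p) := by
    simpa [ZMod.ringChar_zmod_n] using (Fact.out : p.Prime).ne_zero.symm
  have hcount := natCard_curve_eq_card_add_jacobiSum_of_orderOf_eq_three hρ
  have hprod := jacobiSum_mul_jacobiSum_sq_of_orderOf_eq_three hchar hρ
  rw [ZMod.card] at hcount hprod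
  set J := jacobiSum ρ ρ
  set J' := jacobiSum (ρ ^ 2) (ρ ^ 2)
  have hsum : J + J' = -c := by
    rw [hc]
    push_cast
    linear_combination -hcount
  have hbc : b = (c : ℂ) ^ 3 - 3 * p * c := by
    rw [hb, ← hα1, ← hα2]
    ring
  have hJ : J ^ 3 + J' ^ 3 = -b := by
    rw [hbc, show J ^ 3 + J' ^ 3 = (J + J') ^ 3 - 3 * (J * J') * (J + J') by ring, hsum, hprod]
    ring
  rw [jbinom_self_sq_of_orderOf_eq_three hρ, jbinom_sq_self_of_orderOf_eq_three hρ, ZMod.card]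
  refine ⟨hbc, ?_⟩
  field_simp
  linear_combination hJ

/-- Let `p ≡ 1 (mod 3)` be prime, `ρ` a cubic character of `F_p*`, and `c ≡ 1 (mod 3)` the trace
of Frobenius of `y² + y = x³` with `4p = c² + 3d²`. The `p`-th Fourier coefficient of `η(3z)⁸`,
given by `b(p) = α³ + ᾱ³` for the Frobenius eigenvalues `α, ᾱ` (so `α + ᾱ = c`, `αᾱ = p`),
satisfies `b(p) = c³ − 3pc = −p³·[(ρ choose ρ²)³ + (ρ² choose ρ)³]`. -/
theorem eta_coefficient_jacobi (p : ℕ) [Fact p.Prime] (hp3 : 3 < p) (h1 : p % 3 = 1)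
    (ρ : MulChar (ZMod p) ℂ) (hρ : orderOf ρ = 3)
    (c d : ℤ) (hcd : 4 * (p : ℤ) = c ^ 2 + 3 * d ^ 2) (hc3 : c % 3 = 1)
    (hc : c = (p : ℤ) + 1 -
      (1 + (Nat.card {P : ZMod p × ZMod p // P.2 ^ 2 + P.2 = P.1 ^ 3} : ℤ)))
    (α : ℂ) (hα1 : α + (starRingEnd ℂ) α = (c : ℂ)) (hα2 : α * (starRingEnd ℂ) α = (p : ℂ))
    (b : ℂ) (hb : b = α ^ 3 + ((starRingEnd ℂ) α) ^ 3) :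
    b = (c : ℂ) ^ 3 - 3 * (p : ℂ) * (c : ℂ) ∧
      b = -(p : ℂ) ^ 3 * ((jbinom ρ (ρ ^ 2)) ^ 3 + (jbinom (ρ ^ 2) ρ) ^ 3) :=
  eta_coefficient_jacobi_general p ρ hρ c hc α hα1 hα2 b hb
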